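/- arXiv:2308.14545 — 6 statements merged into one kernel-verified Lean document; each statement's English description precedes it below -/
import Mathlib

section
/- For every integral allocation A of items M to agents with XOS valuations v_1,…,v_n, and every partition S_1,…,S_t of M, the sum over k of the contributions C_V^A(S_k) is at most the social welfare ∑_i v_i(A_i), where C_V^A(S) = ∑_i (v_i(A_i) − v_i(A_i ∖ S)). -/
/-!
Fix an agent `i` and an additive component `κ` of `v i` supporting `A i`, i.e. with
`v i (A i) = ∑ j ∈ A i, w i κ j`. Since `v i (A i \ S)` is at least the value of the same component
on `A i \ S`, the loss `v i (A i) - v i (A i \ S)` is at most `∑ j ∈ A i ∩ S, w i κ j`. Summed over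
the blocks of a partition these bounds add up to exactly `v i (A i)`.
-/

open Finset

section Partition

variable {ι κ : Type*} [DecidableEq ι] [Fintype ι] [Fintype κ]

theorem sum_sum_inter_of_partition {S : κ → Finset ι}
    (hSdisj : ∀ k k', k ≠ k' → Disjoint (S k) (S k')) (hScover : univ.biUnion S = univ)
    (A : Finset ι) (f : ι → ℝ) :
    ∑ k, ∑ j ∈ A ∩ S k, f j = ∑ j ∈ A, f j := by
  have hA : univ.biUnion (fun k => A ∩ S k) = A := by
    rw [← inter_biUnion, hScover, inter_univ]
  rw [← sum_biUnion, hA]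
  intro k _ k' _ hkk'
  exact (hSdisj k k' hkk').mono inter_subset_right inter_subset_right

end Partition

section XOS

variable {ι K : Type*} [Fintype K] [Nonempty K]

noncomputable def xosValue (w : K → ι → ℝ) (X : Finset ι) : ℝ :=
  univ.sup' univ_nonempty fun k => ∑ j ∈ X, w k j

theorem exists_xosValue_eq (w : K → ι → ℝ) (X : Finset ι) :
    ∃ k, xosValue w X = ∑ j ∈ X, w k j := by
  obtain ⟨k, -, hk⟩ := exists_mem_eq_sup' univ_nonempty fun k => ∑ j ∈ X, w k j
  exact ⟨k, hk⟩

theorem sum_le_xosValue (w : K → ι → ℝ) (k : K) (X : Finset ι) :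
    ∑ j ∈ X, w k j ≤ xosValue w X :=
  le_sup' (fun k => ∑ j ∈ X, w k j) (mem_univ k)

theorem xosValue_sub_xosValue_sdiff_le [DecidableEq ι] {w : K → ι → ℝ} {k : K} {X : Finset ι}
    (hk : xosValue w X = ∑ j ∈ X, w k j) (T : Finset ι) :
    xosValue w X - xosValue w (X \ T) ≤ ∑ j ∈ X ∩ T, w k j := by
  have hsplit := sum_inter_add_sum_sdiff X T (w k)
  have hsdiff := sum_le_xosValue w k (X \ T)
  linarith

theorem sum_xosValue_sub_xosValue_sdiff_le [DecidableEq ι] [Fintype ι] {t : Type*} [Fintype t]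
    {S : t → Finset ι} (hSdisj : ∀ k k', k ≠ k' → Disjoint (S k) (S k'))
    (hScover : univ.biUnion S = univ) (w : K → ι → ℝ) (X : Finset ι) :
    ∑ s, (xosValue w X - xosValue w (X \ S s)) ≤ xosValue w X := by
  obtain ⟨k, hk⟩ := exists_xosValue_eq w X
  calc ∑ s, (xosValue w X - xosValue w (X \ S s))
      ≤ ∑ s, ∑ j ∈ X ∩ S s, w k j :=
        sum_le_sum fun s _ => xosValue_sub_xosValue_sdiff_le hk (S s)
    _ = xosValue w X := by rw [sum_sum_inter_of_partition hSdisj hScover, hk]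

end XOS

theorem stmt_1_general {ι K : Type*} [Fintype ι] [DecidableEq ι] [Fintype K] [Nonempty K]
    (n t : ℕ)
    (w : Fin n → K → ι → ℝ)
    (v : Fin n → Finset ι → ℝ)
    (hv : ∀ i (S : Finset ι),
      v i S = Finset.univ.sup' Finset.univ_nonempty (fun k => ∑ j ∈ S, w i k j))
    (A : Fin n → Finset ι)
    (S : Fin t → Finset ι)
    (hSdisj : ∀ k k', k ≠ k' → Disjoint (S k) (S k'))
    (hScover : Finset.univ.biUnion S = Finset.univ) :
    ∑ k, ∑ i, (v i (A i) - v i (A i \ S k)) ≤ ∑ i, v i (A i) := by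
  obtain rfl : v = fun i => xosValue (w i) := funext₂ hv
  rw [sum_comm]
  exact sum_le_sum fun i _ => sum_xosValue_sub_xosValue_sdiff_le hSdisj hScover (w i) (A i)

/-- For an integral allocation `A` (pairwise disjoint bundles) of items to
`n` agents with XOS valuations `v i` (max over additive components with weights `w i k`),
and any partition `S_1, …, S_t` of the item set, the total contribution
`∑ k ∑ i (v i (A i) - v i (A i \ S k))` is at most the social welfare `∑ i v i (A i)`. -/
theorem stmt_1 {ι K : Type*} [Fintype ι] [DecidableEq ι] [Fintype K] [Nonempty K]
    (n t : ℕ)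
    (w : Fin n → K → ι → ℝ) (hw : ∀ i k j, 0 ≤ w i k j)
    (v : Fin n → Finset ι → ℝ)
    (hv : ∀ i (S : Finset ι),
      v i S = Finset.univ.sup' Finset.univ_nonempty (fun k => ∑ j ∈ S, w i k j))
    (A : Fin n → Finset ι)
    (hAdisj : ∀ i i', i ≠ i' → Disjoint (A i) (A i'))
    (S : Fin t → Finset ι)
    (hSdisj : ∀ k k', k ≠ k' → Disjoint (S k) (S k'))
    (hScover : Finset.univ.biUnion S = Finset.univ) :
    ∑ k, ∑ i, (v i (A i) - v i (A i \ S k)) ≤ ∑ i, v i (A i) :=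
  stmt_1_general n t w v hv A S hSdisj hScover
end

section
/- In the two-agent four-item instance above, no randomized allocation guarantees both agents ex-ante expected value strictly greater than 3/2; since both MMS values equal 2, the best ex-ante MMS approximation on this instance is at most 3/4. -/
/-!
Every bipartition gives the two agents total value at most `3`: agent 1's value on `S` is one of
its additive clauses on `S`, agent 2's on `Sᶜ` is one of its clauses on `Sᶜ`, and such a pair is
bounded item by item by the pointwise maximum of the two clauses, which sums to `3` for each of
the four pairs. Averaging over the distribution, the two ex-ante values sum to at most `3`, so
the smaller one is at most `3/2`.
-/

open Finset

theorem sum_add_sum_compl_le_sum_max {ι α : Type*} [Fintype ι] [DecidableEq ι]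
    [AddCommMonoid α] [LinearOrder α] [IsOrderedAddMonoid α] (a b : ι → α) (S : Finset ι) :
    ∑ j ∈ S, a j + ∑ j ∈ Sᶜ, b j ≤ ∑ j, max (a j) (b j) := by
  rw [← sum_add_sum_compl S]
  gcongr with j
  · exact le_max_left _ _
  · exact le_max_right _ _

theorem sum_mul_add_sum_mul_le_of_forall_add_le {ι : Type*} [Fintype ι] {p f g : ι → ℝ}
    {c : ℝ} (hp0 : ∀ i, 0 ≤ p i) (hp1 : ∑ i, p i = 1) (hfg : ∀ i, f i + g i ≤ c) :
    ∑ i, p i * f i + ∑ i, p i * g i ≤ c :=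
  calc ∑ i, p i * f i + ∑ i, p i * g i = ∑ i, p i * (f i + g i) := by
        simp only [mul_add, sum_add_distrib]
    _ ≤ ∑ i, p i * c := sum_le_sum fun i _ => mul_le_mul_of_nonneg_left (hfg i) (hp0 i)
    _ = c := by rw [← sum_mul, hp1, one_mul]

/-- In the two-agent four-item instance, for any randomized allocation (a
distribution `p` over bipartitions, agent 1 receiving `S` and agent 2 receiving `Sᶜ`),
the minimum of the two ex-ante expected values is at most `3/2 = (3/4) * 2`; since both
maximin shares equal `2`, the ex-ante MMS approximation is at most `3/4`. -/
theorem stmt_7 (v1 v2 : Finset (Fin 4) → ℝ)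
    (hv1 : ∀ S, v1 S = max (∑ j ∈ S, (![1, 1, 0, 0] : Fin 4 → ℝ) j)
                           (∑ j ∈ S, (![0, 0, 1, 1] : Fin 4 → ℝ) j))
    (hv2 : ∀ S, v2 S = max (∑ j ∈ S, (![1, 0, 0, 1] : Fin 4 → ℝ) j)
                           (∑ j ∈ S, (![0, 1, 1, 0] : Fin 4 → ℝ) j))
    (p : Finset (Fin 4) → ℝ) (hp0 : ∀ S, 0 ≤ p S) (hp1 : ∑ S, p S = 1) :
    min (∑ S, p S * v1 S) (∑ S, p S * v2 Sᶜ) ≤ (3 / 4) * 2 := by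
  have hbipartition : ∀ S, v1 S + v2 Sᶜ ≤ 3 := by
    intro S
    simp only [hv1, hv2, max_add, add_max, max_le_iff]
    refine ⟨⟨?_, ?_⟩, ?_, ?_⟩ <;>
      refine (sum_add_sum_compl_le_sum_max _ _ S).trans (le_of_eq ?_) <;>
      simp [Fin.sum_univ_four] <;> norm_num
  have hexante := sum_mul_add_sum_mul_le_of_forall_add_le hp0 hp1 hbipartition
  linarith [min_le_left (∑ S, p S * v1 S) (∑ S, p S * v2 Sᶜ),
    min_le_right (∑ S, p S * v1 S) (∑ S, p S * v2 Sᶜ)]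
end

section
/- Removing one item and one agent from a fair-division instance does not decrease the maximin-share value of any remaining agent: if MMS_i is agent i's maximin share with n agents and item set M, then for any item b, agent i's maximin share with n−1 agents and item set M∖{b} is at least MMS_i. -/
/-!
Let `j` be the only bundle that can contain `b`. Merge `P j` into one of the other `n` bundles
and delete `b`: every new bundle still contains a whole old bundle other than `P j`, so by
monotonicity its value is at least the minimum over the old bundles.
-/

open Finset

section FiberUnion

variable {α β ι : Type*} [Fintype α] [DecidableEq β] [DecidableEq ι]

def fiberUnion (P : α → Finset ι) (f : α → β) (y : β) : Finset ι :=
  (univ.filter (f · = y)).biUnion P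

theorem subset_fiberUnion (P : α → Finset ι) (f : α → β) (x : α) :
    P x ⊆ fiberUnion P f (f x) :=
  subset_biUnion_of_mem P (by simp)

theorem disjoint_fiberUnion {P : α → Finset ι} (hP : ∀ x x', x ≠ x' → Disjoint (P x) (P x'))
    (f : α → β) {y y' : β} (hy : y ≠ y') :
    Disjoint (fiberUnion P f y) (fiberUnion P f y') := by
  simp only [fiberUnion, disjoint_biUnion_left, disjoint_biUnion_right, mem_filter, mem_univ,
    true_and]
  rintro x rfl x' rfl
  exact hP _ _ (by rintro rfl; exact hy rfl)

theorem biUnion_fiberUnion [Fintype β] (P : α → Finset ι) (f : α → β) :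
    univ.biUnion (fiberUnion P f) = univ.biUnion P := by
  ext i
  simp [fiberUnion]

end FiberUnion

theorem exists_forall_ne_notMem_of_pairwise_disjoint {α ι : Type*} [Nonempty α]
    {P : α → Finset ι} (hP : ∀ x x', x ≠ x' → Disjoint (P x) (P x')) (b : ι) :
    ∃ j, ∀ x, x ≠ j → b ∉ P x := by
  by_cases h : ∃ j, b ∈ P j
  · obtain ⟨j, hj⟩ := h
    exact ⟨j, fun x hx hbx => disjoint_left.mp (hP x j hx) hbx hj⟩
  · push Not at h
    exact ⟨Classical.arbitrary α, fun x _ => h x⟩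

theorem stmt_10_general {ι : Type*} [DecidableEq ι] (n : ℕ) (hn : 0 < n)
    (v : Finset ι → ℝ) (hmono : ∀ S T, S ⊆ T → v S ≤ v T)
    (M : Finset ι) (b : ι)
    (P : Fin (n + 1) → Finset ι)
    (hPdisj : ∀ a a', a ≠ a' → Disjoint (P a) (P a'))
    (hPcover : Finset.univ.biUnion P = M) :
    ∃ Q : Fin n → Finset ι,
      (∀ a a', a ≠ a' → Disjoint (Q a) (Q a')) ∧
      Finset.univ.biUnion Q = M.erase b ∧
      ∀ a, (Finset.univ.inf' Finset.univ_nonempty fun c => v (P c)) ≤ v (Q a) := by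
  have : Nonempty (Fin n) := ⟨⟨0, hn⟩⟩
  obtain ⟨j, hj⟩ := exists_forall_ne_notMem_of_pairwise_disjoint hPdisj b
  -- `f` merges `P j` into one of the other bundles and keeps the rest apart.
  set f := Function.invFun j.succAbove
  have hf : ∀ a, f (j.succAbove a) = a := Function.leftInverse_invFun Fin.succAbove_right_injective
  refine ⟨fun a => (fiberUnion P f a).erase b, fun a a' ha => ?_, ?_, fun a => ?_⟩
  · exact (disjoint_fiberUnion hPdisj f ha).mono (erase_subset _ _) (erase_subset _ _)
  · rw [← hPcover, ← biUnion_fiberUnion P f, erase_biUnion]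
  · have hsub : P (j.succAbove a) ⊆ (fiberUnion P f a).erase b := by
      refine subset_erase.mpr ⟨?_, hj _ (Fin.succAbove_ne j a)⟩
      simpa only [hf] using subset_fiberUnion P f (j.succAbove a)
    exact (inf'_le _ (mem_univ _)).trans (hmono _ _ hsub)

/-- Removing one item and one agent does not decrease the maximin share of
a remaining agent: for a monotone valuation `v`, any partition `P` of `M` into `n + 1`
bundles, and any item `b ∈ M`, there is a partition `Q` of `M \ {b}` into `n` bundles,
each of value at least the minimum value of the bundles of `P`. -/
theorem stmt_10 {ι : Type*} [DecidableEq ι] (n : ℕ) (hn : 0 < n)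
    (v : Finset ι → ℝ) (hmono : ∀ S T, S ⊆ T → v S ≤ v T)
    (M : Finset ι) (b : ι) (hb : b ∈ M)
    (P : Fin (n + 1) → Finset ι)
    (hPdisj : ∀ a a', a ≠ a' → Disjoint (P a) (P a'))
    (hPcover : Finset.univ.biUnion P = M) :
    ∃ Q : Fin n → Finset ι,
      (∀ a a', a ≠ a' → Disjoint (Q a) (Q a')) ∧
      Finset.univ.biUnion Q = M.erase b ∧
      ∀ a, (Finset.univ.inf' Finset.univ_nonempty fun c => v (P c)) ≤ v (Q a) :=
  stmt_10_general n hn v hmono M b P hPdisj hPcover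
end

section
/- Let F be a half-integral complete allocation (f_{i,j} ∈ {0, 1/2, 1}, ∑_i f_{i,j} = 1) of m items to n agents with additive valuations. Then there exist two integral allocations A^1, A^2 such that (i) for every agent i and item j, the fraction of the two allocations giving b_j to i equals f_{i,j} (so the uniform mixture R over {A^1,A^2} satisfies v_i(R) = v_i(F)), and (ii) for every agent i and r ∈ {1,2}, v_i(A^r_i) ≥ v_i(F) − (1/2)·max{v_i(b_j) : f_{i,j} = 1/2}. -/
/-!
Decompose `2 f` column by column into two point masses: item `j` gets two (possibly equal)
owners `o j false`, `o j true`, and any choice `x j : Bool` with `A1 j = o j (x j)`,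
`A2 j = o j (!x j)` has the prescribed marginals. Each agent lists her half items by decreasing
value and pairs them up consecutively. If every pair is split between her `A1` and `A2` bundles,
her value in `A1` minus her value in `A2` is an alternating sum of a decreasing sequence, hence
at most her largest half-item value in absolute value.

Such a choice exists: viewing half items as edges between their two owners and `x` as an
orientation, the pairs are matched half-edges at an agent, each of which must get exactly one
head. Contracting an edge `e` (joining the partners of its two ends) and orienting the smaller
graph, the orientation extends to `e`.
-/

open Finset

namespace HalfIntegralRounding

variable {α : Type*}

def consecutivePairs : List α → List (α × α)
  | a :: b :: l => (a, b) :: consecutivePairs l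
  | _ => []

def PairedIn (l : List α) (a b : α) : Prop :=
  (a, b) ∈ consecutivePairs l ∨ (b, a) ∈ consecutivePairs l

theorem consecutivePairs_map {γ : Type*} (g : α → γ) :
    ∀ l : List α, consecutivePairs (l.map g) = (consecutivePairs l).map (Prod.map g g)
  | a :: b :: l => by simp [consecutivePairs, consecutivePairs_map g l]
  | [] | [_] => rfl

theorem mem_of_mem_consecutivePairs : ∀ {l : List α} {p : α × α},
    p ∈ consecutivePairs l → p.1 ∈ l ∧ p.2 ∈ l
  | a :: b :: l, p, h => by
    rcases List.mem_cons.1 h with rfl | h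
    · simp
    · have := mem_of_mem_consecutivePairs h
      simp [this]
  | [], _, h | [_], _, h => by simp [consecutivePairs] at h

theorem fst_ne_snd_of_mem_consecutivePairs : ∀ {l : List α} {p : α × α},
    l.Nodup → p ∈ consecutivePairs l → p.1 ≠ p.2
  | a :: b :: l, p, hl, h => by
    rcases List.mem_cons.1 h with rfl | h
    · simp only [List.nodup_cons, List.mem_cons, not_or] at hl
      exact hl.1.1
    · exact fst_ne_snd_of_mem_consecutivePairs hl.of_cons.of_cons h
  | [], _, _, h | [_], _, _, h => by simp [consecutivePairs] at h

theorem PairedIn.mem {l : List α} {a b : α} (h : PairedIn l a b) : a ∈ l := by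
  rcases h with h | h
  · exact (mem_of_mem_consecutivePairs h).1
  · exact (mem_of_mem_consecutivePairs h).2

theorem PairedIn.symm {l : List α} {a b : α} (h : PairedIn l a b) : PairedIn l b a := Or.symm h

theorem PairedIn.unique : ∀ {l : List α} {a b b' : α},
    l.Nodup → PairedIn l a b → PairedIn l a b' → b = b'
  | x :: y :: l, a, b, b', hl, h, h' => by
    have ih := @PairedIn.unique l a b b' hl.of_cons.of_cons
    simp only [PairedIn, consecutivePairs, List.mem_cons, Prod.mk.injEq] at h h' ih
    simp only [List.nodup_cons, List.mem_cons, not_or] at hl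
    have hmem := @mem_of_mem_consecutivePairs _ l
    grind
  | [], _, _, _, _, h, _ | [_], _, _, _, _, h, _ => by simp [PairedIn, consecutivePairs] at h

theorem abs_add_le_of_mul_nonpos {a b : ℝ} (hab : a * b ≤ 0) (hba : |b| ≤ |a|) :
    |a + b| ≤ |a| - |b| := by
  rcases abs_cases a with ⟨ha, _⟩ | ⟨ha, _⟩ <;> rcases abs_cases b with ⟨hb, _⟩ | ⟨hb, _⟩ <;>
    rw [abs_le] <;> constructor <;> nlinarith

theorem abs_sum_le_abs_headD : ∀ l : List ℝ, l.Pairwise (fun a b => |b| ≤ |a|) →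
    (∀ p ∈ consecutivePairs l, p.1 * p.2 ≤ 0) → |l.sum| ≤ |l.headD 0|
  | a :: b :: l, hsort, hpairs => by
    have ih := abs_sum_le_abs_headD l hsort.of_cons.of_cons
      fun p hp => hpairs p (List.mem_cons_of_mem _ hp)
    have hab := abs_add_le_of_mul_nonpos (hpairs (a, b) List.mem_cons_self)
      (List.rel_of_pairwise_cons hsort List.mem_cons_self)
    have hb : |l.headD 0| ≤ |b| := by
      cases l with
      | nil => simp
      | cons c l => exact List.rel_of_pairwise_cons hsort.of_cons List.mem_cons_self
    calc |(a :: b :: l).sum| = |(a + b) + l.sum| := by simp [add_assoc]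
      _ ≤ |a + b| + |l.sum| := abs_add_le _ _
      _ ≤ |(a :: b :: l).headD 0| := by simp only [List.headD_cons]; linarith
  | [], _, _ | [_], _, _ => by simp

theorem exists_list_sorted_ge {γ : Type*} [LinearOrder γ] (s : Finset α) (v : α → γ) :
    ∃ l : List α, l.Nodup ∧ (∀ a, a ∈ l ↔ a ∈ s) ∧ l.Pairwise (fun a b => v b ≤ v a) := by
  have hperm := List.mergeSort_perm s.toList (fun a b => decide (v b ≤ v a))
  refine ⟨_, hperm.nodup_iff.2 s.nodup_toList, fun a => by simp [hperm.mem_iff], ?_⟩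
  refine (List.pairwise_mergeSort (fun a b c hab hbc => ?_) (fun a b => ?_) _).imp (by simp)
  · simp only [decide_eq_true_eq] at *; exact hbc.trans hab
  · simpa using le_total (v b) (v a)

section Orientation

variable {V : Type*} {G : SimpleGraph (V × Bool)}

/-- Vertices of `V` are edges of a multigraph and `(j, s)` is the end `s` of edge `j`; `x j = s`
says that edge `j` points towards its end `s`. Adjacent ends must have exactly one head. -/
def IsAlternating (G : SimpleGraph (V × Bool)) (x : V → Bool) : Prop :=
  ∀ p q, G.Adj p q → (x p.1 = p.2 ↔ x q.1 ≠ q.2)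

def contractPorts (G : SimpleGraph (V × Bool)) (e : V) : SimpleGraph (V × Bool) :=
  SimpleGraph.fromRel fun p q => p.1 ≠ e ∧ q.1 ≠ e ∧
    (G.Adj p q ∨ ∃ s, G.Adj p (e, s) ∧ G.Adj (e, !s) q)

theorem contractPorts_adj_of_adj {e : V} {p q : V × Bool} (hp : p.1 ≠ e) (hq : q.1 ≠ e)
    (h : G.Adj p q) : (contractPorts G e).Adj p q :=
  (SimpleGraph.fromRel_adj _ _ _).2 ⟨G.ne_of_adj h, .inl ⟨hp, hq, .inl h⟩⟩

theorem contractPorts_adj_of_adj_adj (hG : ∀ ⦃p q q'⦄, G.Adj p q → G.Adj p q' → q = q')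
    {e : V} {s : Bool} {p q : V × Bool} (hp : p.1 ≠ e) (hq : q.1 ≠ e)
    (hpe : G.Adj p (e, s)) (heq : G.Adj (e, !s) q) : (contractPorts G e).Adj p q := by
  refine (SimpleGraph.fromRel_adj _ _ _).2 ⟨?_, .inl ⟨hp, hq, .inr ⟨s, hpe, heq⟩⟩⟩
  rintro rfl
  simpa using congrArg Prod.snd (hG hpe heq.symm)

theorem contractPorts_adj_unique (hG : ∀ ⦃p q q'⦄, G.Adj p q → G.Adj p q' → q = q') (e : V)
    {p q q' : V × Bool} (h : (contractPorts G e).Adj p q) (h' : (contractPorts G e).Adj p q') :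
    q = q' := by
  have hsymm : ∀ {p q}, (p.1 ≠ e ∧ q.1 ≠ e ∧
      (G.Adj q p ∨ ∃ s, G.Adj q (e, s) ∧ G.Adj (e, !s) p)) →
      (p.1 ≠ e ∧ q.1 ≠ e ∧ (G.Adj p q ∨ ∃ s, G.Adj p (e, s) ∧ G.Adj (e, !s) q)) := by
    rintro p q ⟨hp, hq, h | ⟨s, h₁, h₂⟩⟩
    · exact ⟨hp, hq, .inl h.symm⟩
    · exact ⟨hp, hq, .inr ⟨!s, h₂.symm, by simpa using h₁.symm⟩⟩
  simp only [contractPorts, SimpleGraph.fromRel_adj] at h h'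
  obtain ⟨-, hq, h | ⟨s, h₁, h₂⟩⟩ := h.2.elim id fun h => hsymm ⟨h.2.1, h.1, h.2.2⟩
  all_goals obtain ⟨-, hq', h' | ⟨s', h₁', h₂'⟩⟩ := h'.2.elim id fun h => hsymm ⟨h.2.1, h.1, h.2.2⟩
  · exact hG h h'
  · exact absurd (congrArg Prod.fst (hG h h₁')) hq
  · exact absurd (congrArg Prod.fst (hG h' h₁)) hq'
  · obtain rfl : s = s' := by simpa using congrArg Prod.snd (hG h₁ h₁')
    exact hG h₂ h₂'

theorem ne_and_exists_adj_of_contractPorts_adj {e : V} {p q : V × Bool}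
    (h : (contractPorts G e).Adj p q) : p.1 ≠ e ∧ ∃ r, G.Adj p r := by
  simp only [contractPorts, SimpleGraph.fromRel_adj] at h
  rcases h.2 with ⟨hp, -, h | ⟨s, h, -⟩⟩ | ⟨-, hp, h | ⟨s, -, h⟩⟩
  exacts [⟨hp, _, h⟩, ⟨hp, _, h⟩, ⟨hp, _, h.symm⟩, ⟨hp, _, h.symm⟩]

/-- One outside partner of a port of `e` forces the value at `e`; the contracted edge makes
that value compatible with the partner of the other port. -/
theorem exists_compatible_value (hG : ∀ ⦃p q q'⦄, G.Adj p q → G.Adj p q' → q = q') {e : V}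
    {x : V → Bool} (hx : IsAlternating (contractPorts G e) x) :
    ∃ b : Bool, ∀ s q, G.Adj (e, s) q → q.1 ≠ e → (b = s ↔ x q.1 ≠ q.2) := by
  by_cases h : ∃ s q, G.Adj (e, s) q ∧ q.1 ≠ e
  · obtain ⟨s₀, q₀, h₀, hq₀⟩ := h
    refine ⟨if x q₀.1 = q₀.2 then !s₀ else s₀, fun s q hq hqe => ?_⟩
    rcases Bool.eq_or_eq_not s s₀ with rfl | rfl
    · obtain rfl := hG hq h₀
      split_ifs with hx₀ <;> simp [hx₀]
    · have := hx _ _ (contractPorts_adj_of_adj_adj hG hq₀ hqe h₀.symm hq)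
      split_ifs with hx₀
      · simp only [hx₀, true_iff] at this
        simp [this]
      · simp only [hx₀, false_iff, not_not] at this
        simp [this]
  · exact ⟨true, fun s q hq hqe => absurd ⟨s, q, hq, hqe⟩ h⟩

theorem isAlternating_update [DecidableEq V] {e : V} {x : V → Bool} {b : Bool}
    (hx : IsAlternating (contractPorts G e) x)
    (hb : ∀ s q, G.Adj (e, s) q → q.1 ≠ e → (b = s ↔ x q.1 ≠ q.2)) :
    IsAlternating G (Function.update x e b) := by
  have he : ∀ s q, G.Adj (e, s) q →
      (Function.update x e b e = s ↔ Function.update x e b q.1 ≠ q.2) := by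
    intro s q hq
    by_cases hqe : q.1 = e
    · obtain ⟨q₁, q₂⟩ := q
      obtain rfl : e = q₁ := hqe.symm
      obtain rfl : q₂ = !s := (Bool.eq_or_eq_not q₂ s).resolve_left fun h => G.irrefl (h ▸ hq)
      cases Function.update x e b e <;> cases s <;> simp
    · rw [Function.update_self, Function.update_of_ne hqe]
      exact hb s q hq hqe
  intro p q h
  by_cases hpe : p.1 = e
  · obtain ⟨p₁, p₂⟩ := p
    obtain rfl : e = p₁ := hpe.symm
    exact he p₂ q h
  by_cases hqe : q.1 = e
  · obtain ⟨q₁, q₂⟩ := q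
    obtain rfl : e = q₁ := hqe.symm
    exact iff_not_comm.1 (he q₂ p h.symm)
  · rw [Function.update_of_ne hpe, Function.update_of_ne hqe]
    exact hx p q (contractPorts_adj_of_adj hpe hqe h)

theorem exists_isAlternating [DecidableEq V] (S : Finset V)
    (hG : ∀ ⦃p q q'⦄, G.Adj p q → G.Adj p q' → q = q') (hS : ∀ p q, G.Adj p q → p.1 ∈ S) :
    ∃ x, IsAlternating G x := by
  induction S using Finset.induction_on generalizing G with
  | empty => exact ⟨fun _ => true, fun p q h => absurd (hS p q h) (by simp)⟩
  | insert e S _ ih =>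
    obtain ⟨x, hx⟩ := ih (fun _ _ _ => contractPorts_adj_unique hG e) fun p q h => by
      obtain ⟨hp, r, hr⟩ := ne_and_exists_adj_of_contractPorts_adj h
      exact (Finset.mem_insert.1 (hS p r hr)).resolve_left hp
    obtain ⟨b, hb⟩ := exists_compatible_value hG hx
    exact ⟨_, isAlternating_update hx hb⟩

end Orientation

section Rounding

variable {α β : Type*}

theorem eq_of_xor {o : Bool → α} {i : α} (h : Xor (o false = i) (o true = i)) {s t : Bool}
    (hs : o s = i) (ht : o t = i) : s = t := by
  cases s <;> cases t <;> simp_all [Xor]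

theorem exists_of_xor {o : Bool → α} {i : α} (h : Xor (o false = i) (o true = i)) :
    ∃ s, o s = i :=
  h.elim (fun h => ⟨false, h.1⟩) fun h => ⟨true, h.1⟩

/-- Port `(j, s)` of item `j` sits at agent `o j s`; two ports at the same agent are adjacent when
their items form a pair of that agent's list. -/
def pairingGraph (o : β → Bool → α) (L : α → List β) : SimpleGraph (β × Bool) :=
  SimpleGraph.fromRel fun p q => o q.1 q.2 = o p.1 p.2 ∧ PairedIn (L (o p.1 p.2)) p.1 q.1

variable {o : β → Bool → α} {L : α → List β}

theorem pairingGraph_adj {p q : β × Bool} : (pairingGraph o L).Adj p q ↔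
    p ≠ q ∧ o q.1 q.2 = o p.1 p.2 ∧ PairedIn (L (o p.1 p.2)) p.1 q.1 := by
  rw [pairingGraph, SimpleGraph.fromRel_adj]
  refine and_congr_right fun _ => or_iff_left_of_imp ?_
  rintro ⟨h, hpq⟩
  exact ⟨h.symm, h ▸ hpq.symm⟩

theorem pairingGraph_adj_unique (hL : ∀ i, (L i).Nodup)
    (hside : ∀ i j, j ∈ L i → Xor (o j false = i) (o j true = i)) {p q q' : β × Bool}
    (h : (pairingGraph o L).Adj p q) (h' : (pairingGraph o L).Adj p q') : q = q' := by
  rw [pairingGraph_adj] at h h'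
  have h1 : q.1 = q'.1 := h.2.2.unique (hL _) h'.2.2
  have h2 : o q.1 q'.2 = o p.1 p.2 := h1 ▸ h'.2.1
  exact Prod.ext h1 (eq_of_xor (hside _ _ h.2.2.symm.mem) h.2.1 h2)

variable [DecidableEq α]

def signedShare (o : β → Bool → α) (x : β → Bool) (i : α) (j : β) : ℝ :=
  (if o j (x j) = i then 1 else 0) - (if o j (!x j) = i then 1 else 0)

variable {x : β → Bool} {i : α} {j : β}

theorem signedShare_of_xor (h : Xor (o j false = i) (o j true = i)) {s : Bool}
    (hs : o j s = i) : signedShare o x i j = if x j = s then 1 else -1 := by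
  have hns : o j (!s) ≠ i := fun h' => by simpa using eq_of_xor h hs h'
  rcases Bool.eq_or_eq_not (x j) s with hx | hx <;> simp [signedShare, hx, hs, hns]

theorem signedShare_of_not_xor (h : ¬Xor (o j false = i) (o j true = i)) :
    signedShare o x i j = 0 := by
  rw [xor_iff_not_iff, not_not] at h
  cases hxj : x j <;> simp [signedShare, hxj, h]

theorem abs_signedShare_of_xor (h : Xor (o j false = i) (o j true = i)) :
    |signedShare o x i j| = 1 := by
  obtain ⟨s, hs⟩ := exists_of_xor h
  rw [signedShare_of_xor h hs]
  split_ifs <;> simp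

theorem signedShare_mul_of_mem_consecutivePairs (hL : (L i).Nodup)
    (hside : ∀ j, j ∈ L i → Xor (o j false = i) (o j true = i))
    (hx : IsAlternating (pairingGraph o L) x) {j' : β}
    (hp : (j, j') ∈ consecutivePairs (L i)) :
    signedShare o x i j * signedShare o x i j' = -1 := by
  obtain ⟨hj, hj'⟩ := mem_of_mem_consecutivePairs hp
  obtain ⟨s, hs⟩ := exists_of_xor (hside j hj)
  obtain ⟨s', hs'⟩ := exists_of_xor (hside j' hj')
  have hadj : (pairingGraph o L).Adj (j, s) (j', s') := pairingGraph_adj.2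
    ⟨fun h => fst_ne_snd_of_mem_consecutivePairs hL hp (congrArg Prod.fst h),
      hs'.trans hs.symm, hs ▸ .inl hp⟩
  have := hx _ _ hadj
  rw [signedShare_of_xor (hside j hj) hs, signedShare_of_xor (hside j' hj') hs']
  by_cases hxs : x j = s
  · simp [hxs, this.1 hxs]
  · have : x j' = s' := by simpa [hxs] using this
    simp [hxs, this]

theorem sum_filter_sub_sum_filter [Fintype β] (o : β → Bool → α) (x : β → Bool) (v : β → ℝ)
    (i : α) : ∑ j ∈ univ.filter (fun j => o j (x j) = i), v j
      - ∑ j ∈ univ.filter (fun j => o j (!x j) = i), v j = ∑ j, v j * signedShare o x i j := by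
  simp only [sum_filter, ← sum_sub_distrib, signedShare, mul_sub, mul_ite, mul_one, mul_zero]

theorem abs_sum_signedShare_le [Fintype β] {v : β → ℝ} (hv : ∀ j, 0 ≤ v j) {c : ℝ} (hc : 0 ≤ c)
    (hvc : ∀ j, Xor (o j false = i) (o j true = i) → v j ≤ c) (hL : (L i).Nodup)
    (hside : ∀ j, j ∈ L i ↔ Xor (o j false = i) (o j true = i))
    (hsort : (L i).Pairwise (fun a b => v b ≤ v a)) (hx : IsAlternating (pairingGraph o L) x) :
    |∑ j, v j * signedShare o x i j| ≤ c := by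
  set w : β → ℝ := fun j => v j * signedShare o x i j
  have habs : ∀ j ∈ L i, |w j| = v j := fun j hj => by
    simp [w, abs_mul, abs_signedShare_of_xor ((hside j).1 hj), abs_of_nonneg (hv j)]
  have hsum : ∑ j, w j = ((L i).map w).sum := by
    classical
    rw [← List.sum_toFinset _ hL]
    refine (sum_subset (subset_univ _) fun j _ hj => ?_).symm
    rw [List.mem_toFinset, hside] at hj
    simp [w, signedShare_of_not_xor hj]
  have hsorted : ((L i).map w).Pairwise (fun a b => |b| ≤ |a|) :=
    List.pairwise_map.2 <| hsort.imp_of_mem fun ha hb h => by rwa [habs _ ha, habs _ hb]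
  have hpairs : ∀ p ∈ consecutivePairs ((L i).map w), p.1 * p.2 ≤ 0 := by
    rw [consecutivePairs_map]
    intro p hmem
    obtain ⟨⟨j, j'⟩, hp, rfl⟩ := List.mem_map.1 hmem
    have := signedShare_mul_of_mem_consecutivePairs hL (fun j => (hside j).1) hx hp
    calc w j * w j' = -(v j * v j') := by simp only [w]; linear_combination (v j * v j') * this
      _ ≤ 0 := neg_nonpos.2 (mul_nonneg (hv j) (hv j'))
  have hhead : |((L i).map w).headD 0| ≤ c := by
    cases hLi : L i with
    | nil => simpa using hc
    | cons j _ =>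
      have hj : j ∈ L i := hLi ▸ List.mem_cons_self
      simpa [habs j hj] using hvc j ((hside j).1 hj)
  calc |∑ j, w j| = |((L i).map w).sum| := by rw [hsum]
    _ ≤ |((L i).map w).headD 0| := abs_sum_le_abs_headD _ hsorted hpairs
    _ ≤ c := hhead

theorem exists_balanced_rounding [Fintype β] (o : β → Bool → α) (v : α → β → ℝ)
    (hv : ∀ i j, 0 ≤ v i j) : ∃ x : β → Bool, ∀ i (c : ℝ), 0 ≤ c →
      (∀ j, Xor (o j false = i) (o j true = i) → v i j ≤ c) →
      |∑ j ∈ univ.filter (fun j => o j (x j) = i), v i j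
        - ∑ j ∈ univ.filter (fun j => o j (!x j) = i), v i j| ≤ c := by
  classical
  choose L hL hmem hsort using fun i =>
    exists_list_sorted_ge (univ.filter fun j => Xor (o j false = i) (o j true = i)) (v i)
  have hside : ∀ i j, j ∈ L i ↔ Xor (o j false = i) (o j true = i) := by simp [hmem]
  obtain ⟨x, hx⟩ := exists_isAlternating (G := pairingGraph o L) univ
    (fun _ _ _ => pairingGraph_adj_unique hL fun i j => (hside i j).1) (by simp)
  refine ⟨x, fun i c hc hvc => ?_⟩
  rw [sum_filter_sub_sum_filter]
  exact abs_sum_signedShare_le (hv i) hc hvc (hL i) (hside i) (hsort i) hx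

end Rounding

section HalfIntegral

variable {ι : Type*} [Fintype ι] [DecidableEq ι]

theorem exists_pair_of_sum_eq_two (h : ι → ℕ) (hsum : ∑ i, h i = 2) :
    ∃ o : Bool → ι, ∀ i,
      h i = (if o false = i then 1 else 0) + (if o true = i then 1 else 0) := by
  set s := Finsupp.toMultiset (Finsupp.equivFunOnFinite.symm h)
  have hcount : ∀ i, s.count i = h i := fun i => by simp [s, Finsupp.count_toMultiset]
  obtain ⟨a, b, hab⟩ := Multiset.card_eq_two.1 (show s.card = 2 by
    simp [s, Finsupp.card_toMultiset, Finsupp.sum_fintype, hsum])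
  refine ⟨fun t => bif t then b else a, fun i => ?_⟩
  rw [← hcount, hab]
  simp [Multiset.insert_eq_cons, Multiset.count_cons, Multiset.count_singleton, eq_comm,
    add_comm]

theorem exists_pair_of_half_integral (g : ι → ℝ) (hg : ∀ i, g i = 0 ∨ g i = 1 / 2 ∨ g i = 1)
    (hsum : ∑ i, g i = 1) : ∃ o : Bool → ι, ∀ i,
      (if o false = i then (1 : ℝ) else 0) + (if o true = i then 1 else 0) = 2 * g i := by
  have : ∀ i, ∃ k : ℕ, (k : ℝ) = 2 * g i := fun i => by
    rcases hg i with h | h | h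
    exacts [⟨0, by simp [h]⟩, ⟨1, by simp [h]⟩, ⟨2, by simp [h]⟩]
  choose k hk using this
  obtain ⟨o, ho⟩ := exists_pair_of_sum_eq_two k (by
    exact_mod_cast (show ((∑ i, k i : ℕ) : ℝ) = 2 by simp [hk, ← mul_sum, hsum]))
  exact ⟨o, fun i => by rw [← hk, ho i]; push_cast; rfl⟩

end HalfIntegral

theorem sum_filter_add_sum_filter_eq {ι α : Type*} [Fintype ι] [DecidableEq α]
    {A₁ A₂ : ι → α} {a : α} {v g : ι → ℝ}
    (h : ∀ j, (if A₁ j = a then (1 : ℝ) else 0) + (if A₂ j = a then 1 else 0) = 2 * g j) :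
    ∑ j ∈ univ.filter (fun j => A₁ j = a), v j + ∑ j ∈ univ.filter (fun j => A₂ j = a), v j
      = 2 * ∑ j, v j * g j := by
  rw [sum_filter, sum_filter, ← sum_add_distrib, mul_sum]
  refine sum_congr rfl fun j _ => ?_
  have hj := h j
  split_ifs at hj ⊢ <;> linear_combination v j * hj

end HalfIntegralRounding

open HalfIntegralRounding

/-- Half-integral rounding. For a half-integral complete fractional
allocation (`f i j ∈ {0, 1/2, 1}`, `∑ i, f i j = 1`) and additive valuations `val i`,
there are two integral allocations `A1, A2` such that (i) the fraction of the two
allocations giving item `j` to agent `i` equals `f i j` (so the uniform mixture has the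
same ex-ante values as `f`), and (ii) each agent's value in either allocation is at
least her fractional value minus half of any upper bound `c ≥ 0` on the values of her
half-owned items (in particular, minus half of the maximum such value, with the maximum
over an empty set taken to be `0`). -/
theorem stmt_11 (n m : ℕ)
    (val : Fin n → Fin m → ℝ) (hval : ∀ i j, 0 ≤ val i j)
    (f : Fin n → Fin m → ℝ)
    (hhalf : ∀ i j, f i j = 0 ∨ f i j = 1 / 2 ∨ f i j = 1)
    (hcomp : ∀ j, ∑ i, f i j = 1) :
    ∃ A1 A2 : Fin m → Fin n,
      (∀ i j, ((if A1 j = i then (1 : ℝ) else 0) + (if A2 j = i then 1 else 0))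
          = 2 * f i j) ∧
      (∀ i, (∑ j ∈ Finset.univ.filter (fun j => A1 j = i), val i j)
            + (∑ j ∈ Finset.univ.filter (fun j => A2 j = i), val i j)
          = 2 * ∑ j, val i j * f i j) ∧
      (∀ i (c : ℝ), 0 ≤ c → (∀ j, f i j = 1 / 2 → val i j ≤ c) →
        (∑ j, val i j * f i j) - c / 2
            ≤ ∑ j ∈ Finset.univ.filter (fun j => A1 j = i), val i j ∧
        (∑ j, val i j * f i j) - c / 2
            ≤ ∑ j ∈ Finset.univ.filter (fun j => A2 j = i), val i j) := by
  choose o ho using fun j => exists_pair_of_half_integral (f · j) (hhalf · j) (hcomp j)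
  obtain ⟨x, hx⟩ := exists_balanced_rounding o val hval
  have hshare : ∀ i j, (if o j (x j) = i then (1 : ℝ) else 0) + (if o j (!x j) = i then 1 else 0)
      = 2 * f i j := fun i j => by
    rw [← ho j i]
    cases x j
    · rfl
    · exact add_comm _ _
  have hsum := fun i => sum_filter_add_sum_filter_eq (v := val i) (hshare i)
  refine ⟨fun j => o j (x j), fun j => o j (!x j), hshare, hsum, fun i c hc hvc => ?_⟩
  have hgap := abs_le.1 <| hx i c hc fun j hj => hvc j <| by
    have hfj := ho j i
    rcases hj with ⟨h₁, h₂⟩ | ⟨h₁, h₂⟩ <;> simp [h₁, h₂] at hfj <;> linarith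
  have hsumi := hsum i
  constructor <;> linarith [hgap.1, hgap.2]
end

section
/- Let A be an integral allocation maximizing the truncated social welfare ∑_i v̄_i(A_i) over all allocations, where v̄_i(S) = min(t, v_i(S)) for a constant t > 0. Then for every agent i* and every set S of items, the contribution of S to A with respect to v̄ satisfies C^A_{v̄}(S) ≥ v̄_{i*}(S) − v̄_{i*}(A_{i*}). -/
/-! Move all of `S` to agent `i'`, taking it away from everyone else. This is again an
allocation, so by maximality its welfare is at most that of `A`. Every agent other than `i'`
then holds `A i \ S`, so comparing the two welfares with the welfare of `i ↦ A i \ S` leaves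
only agent `i'`, who holds `A i' ∪ S ⊇ S` instead of `A i' \ S ⊆ A i'`; monotonicity of the
truncated valuations finishes the argument. -/

open Finset Function

section

variable {ι κ : Type*} [DecidableEq ι] [DecidableEq κ]

namespace Finset

def transferTo (A : κ → Finset ι) (j : κ) (S : Finset ι) : κ → Finset ι :=
  Function.update (fun i => A i \ S) j (A j ∪ S)

variable {A : κ → Finset ι} {j : κ} {S : Finset ι}

theorem transferTo_self : transferTo A j S j = A j ∪ S :=
  Function.update_self _ _ _

theorem transferTo_of_ne {i : κ} (hi : i ≠ j) : transferTo A j S i = A i \ S :=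
  Function.update_of_ne hi _ _

theorem pairwise_disjoint_transferTo (hA : Pairwise (Disjoint on A)) :
    Pairwise (Disjoint on transferTo A j S) := by
  have key : ∀ i ≠ j, Disjoint (transferTo A j S i) (transferTo A j S j) := fun i hi => by
    rw [transferTo_of_ne hi, transferTo_self, disjoint_union_right]
    exact ⟨(hA hi).mono_left sdiff_subset, sdiff_disjoint⟩
  intro i k hik
  by_cases hi : i = j
  · subst hi
    exact (key k hik.symm).symm
  by_cases hk : k = j
  · subst hk
    exact key i hik
  rw [Function.onFun, transferTo_of_ne hi, transferTo_of_ne hk]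
  exact (hA hik).mono sdiff_subset sdiff_subset

theorem biUnion_transferTo [Fintype κ] :
    univ.biUnion (transferTo A j S) = univ.biUnion A ∪ S := by
  ext x
  simp only [mem_biUnion, mem_univ, true_and, mem_union]
  constructor
  · rintro ⟨i, hx⟩
    by_cases hi : i = j
    · rw [hi, transferTo_self, mem_union] at hx
      exact hx.imp (fun h => ⟨j, h⟩) id
    · rw [transferTo_of_ne hi, mem_sdiff] at hx
      exact Or.inl ⟨i, hx.1⟩
  · rintro (⟨i, hx⟩ | hx)
    · by_cases hi : i = j
      · exact ⟨j, by rw [transferTo_self]; exact mem_union_left _ (hi ▸ hx)⟩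
      by_cases hxS : x ∈ S
      · exact ⟨j, by rw [transferTo_self]; exact mem_union_right _ hxS⟩
      · exact ⟨i, by rw [transferTo_of_ne hi]; exact mem_sdiff.2 ⟨hx, hxS⟩⟩
    · exact ⟨j, by rw [transferTo_self]; exact mem_union_right _ hx⟩

theorem sum_transferTo_sub_sum_sdiff [Fintype κ] (w : κ → Finset ι → ℝ) :
    ∑ i, w i (transferTo A j S i) - ∑ i, w i (A i \ S) = w j (A j ∪ S) - w j (A j \ S) := by
  rw [← sum_sub_distrib, sum_eq_single j, transferTo_self]
  · intro i _ hi
    rw [transferTo_of_ne hi, sub_self]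
  · exact fun h => (h (mem_univ j)).elim

end Finset

def IsAllocation [Fintype ι] [Fintype κ] (B : κ → Finset ι) : Prop :=
  Pairwise (Disjoint on B) ∧ univ.biUnion B = univ

theorem IsAllocation.transferTo [Fintype ι] [Fintype κ] {A : κ → Finset ι} (hA : IsAllocation A)
    (j : κ) (S : Finset ι) : IsAllocation (transferTo A j S) := by
  refine ⟨pairwise_disjoint_transferTo hA.1, ?_⟩
  rw [biUnion_transferTo, hA.2]
  exact union_eq_left.2 (subset_univ S)

/-- The paper's `C^A_w(S)`. -/
def contribution [Fintype κ] (w : κ → Finset ι → ℝ) (A : κ → Finset ι) (S : Finset ι) : ℝ :=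
  ∑ i, (w i (A i) - w i (A i \ S))

theorem sub_le_contribution_of_forall_welfare_le [Fintype ι] [Fintype κ]
    {w : κ → Finset ι → ℝ} (hw : ∀ i, Monotone (w i)) {A : κ → Finset ι}
    (hmax : ∀ B, IsAllocation B → ∑ i, w i (B i) ≤ ∑ i, w i (A i))
    (hA : IsAllocation A) (j : κ) (S : Finset ι) :
    w j S - w j (A j) ≤ contribution w A S := by
  have hwelfare := hmax _ (hA.transferTo j S)
  have hgain := sum_transferTo_sub_sum_sdiff (A := A) (j := j) (S := S) w
  have hS : w j S ≤ w j (A j ∪ S) := hw j subset_union_right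
  have hAj : w j (A j \ S) ≤ w j (A j) := hw j sdiff_subset
  rw [contribution, sum_sub_distrib]
  linarith

end

theorem stmt_13_general {ι : Type*} [Fintype ι] [DecidableEq ι] (n : ℕ) (t : ℝ)
    (v : Fin n → Finset ι → ℝ) (hmono : ∀ i S T, S ⊆ T → v i S ≤ v i T)
    (A : Fin n → Finset ι)
    (hAdisj : ∀ i i', i ≠ i' → Disjoint (A i) (A i'))
    (hAcover : Finset.univ.biUnion A = Finset.univ)
    (hmax : ∀ B : Fin n → Finset ι,
      (∀ i i', i ≠ i' → Disjoint (B i) (B i')) →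
      Finset.univ.biUnion B = Finset.univ →
      ∑ i, min t (v i (B i)) ≤ ∑ i, min t (v i (A i)))
    (i' : Fin n) (S : Finset ι) :
    min t (v i' S) - min t (v i' (A i')) ≤
      ∑ i, (min t (v i (A i)) - min t (v i (A i \ S))) :=
  sub_le_contribution_of_forall_welfare_le (w := fun i T => min t (v i T))
    (fun i _ _ hST => min_le_min_left t (hmono i _ _ hST))
    (fun B hB => hmax B hB.1 hB.2) ⟨hAdisj, hAcover⟩ i' S

/-- If the allocation `A` (a partition of the items) maximizes the
truncated social welfare `∑ i, min t (v i (A i))` over all allocations, then for every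
agent `i'` and every set `S` of items, the contribution of `S` to `A` with respect to
the truncated valuations satisfies
`∑ i (min t (v i (A i)) − min t (v i (A i \ S))) ≥ min t (v i' S) − min t (v i' (A i'))`. -/
theorem stmt_13 {ι : Type*} [Fintype ι] [DecidableEq ι] (n : ℕ) (t : ℝ) (ht : 0 < t)
    (v : Fin n → Finset ι → ℝ) (hmono : ∀ i S T, S ⊆ T → v i S ≤ v i T)
    (A : Fin n → Finset ι)
    (hAdisj : ∀ i i', i ≠ i' → Disjoint (A i) (A i'))
    (hAcover : Finset.univ.biUnion A = Finset.univ)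
    (hmax : ∀ B : Fin n → Finset ι,
      (∀ i i', i ≠ i' → Disjoint (B i) (B i')) →
      Finset.univ.biUnion B = Finset.univ →
      ∑ i, min t (v i (B i)) ≤ ∑ i, min t (v i (A i)))
    (i' : Fin n) (S : Finset ι) :
    min t (v i' S) - min t (v i' (A i')) ≤
      ∑ i, (min t (v i (A i)) - min t (v i (A i \ S))) :=
  stmt_13_general n t v hmono A hAdisj hAcover hmax i' S
end

section
/- Let u be an additive nonnegative valuation on a finite set X of items with u(X) ≥ 1, and let t = 6/13. Suppose every three-element subset of X has u-value less than t/2, and hence every item other than the top two has u-value less than t/6. Let g_1, g_2 be the two most valuable items and let X^1 be a minimal subset of X containing {g_1, g_2} with u(X^1) ≥ t. Then u(X ∖ X^1) ≥ t. -/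
/-! Any item other than `g1, g2` is worth less than `1/13`, since together with `g1, g2` it
forms a triple of value `< 3/13`. As `u g1 + u g2 < 3/13 < 6/13`, the set `X1` must contain
such an item `g`, and minimality gives `u X1 < 6/13 + u g < 7/13`; the rest of `X` is worth
more than `1 - 7/13 = 6/13`. -/

open Finset

lemma Finset.exists_mem_ne_ne {α : Type*} [DecidableEq α] {s : Finset α} (hs : 2 < s.card)
    (a b : α) : ∃ c ∈ s, c ≠ a ∧ c ≠ b := by
  obtain ⟨c, hc, hcb⟩ := (s.erase a).exists_mem_ne
    (by have := s.pred_card_le_card_erase (a := a); omega) b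
  obtain ⟨hca, hcs⟩ := mem_erase.mp hc
  exact ⟨c, hcs, hca, hcb⟩

lemma add_add_lt_of_forall_card_eq_three {ι M : Type*} [DecidableEq ι] [AddCommMonoid M]
    [Preorder M] {u : ι → M} {X : Finset ι} {c : M}
    (h3 : ∀ S ⊆ X, S.card = 3 → ∑ j ∈ S, u j < c) {a b d : ι} (ha : a ∈ X) (hb : b ∈ X)
    (hd : d ∈ X) (hab : a ≠ b) (had : a ≠ d) (hbd : b ≠ d) : u a + u b + u d < c := by
  have hsub : {a, b, d} ⊆ X := by simp [insert_subset_iff, ha, hb, hd]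
  have := h3 _ hsub (card_eq_three.mpr ⟨a, b, d, hab, had, hbd, rfl⟩)
  rwa [sum_insert (by simp [hab, had]), sum_insert (by simp [hbd]), sum_singleton,
    ← add_assoc] at this

theorem stmt_15_general {ι : Type*} [DecidableEq ι]
    (u : ι → ℝ) (hu : ∀ j, 0 ≤ u j)
    (X : Finset ι) (hXval : (1 : ℝ) ≤ ∑ j ∈ X, u j) (hXcard : 3 ≤ X.card)
    (h3 : ∀ S ⊆ X, S.card = 3 → ∑ j ∈ S, u j < (6 / 13 : ℝ) / 2)
    (g1 g2 : ι) (hg1 : g1 ∈ X) (hg2 : g2 ∈ X) (hgne : g1 ≠ g2)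
    (htop1 : ∀ g ∈ X, g ≠ g1 → u g ≤ u g1)
    (htop2 : ∀ g ∈ X, g ≠ g1 → g ≠ g2 → u g ≤ u g2)
    (X1 : Finset ι) (hX1sub : X1 ⊆ X)
    (hX1val : (6 / 13 : ℝ) ≤ ∑ j ∈ X1, u j)
    (hX1min : ∀ g ∈ X1, ∑ j ∈ X1.erase g, u j < (6 / 13 : ℝ)) :
    (6 / 13 : ℝ) ≤ ∑ j ∈ X \ X1, u j := by
  have htriple : ∀ g ∈ X, g ≠ g1 → g ≠ g2 → u g1 + u g2 + u g < 3 / 13 := fun g hg h1 h2 => by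
    have := add_add_lt_of_forall_card_eq_three h3 hg1 hg2 hg hgne h1.symm h2.symm
    linarith
  have hsmall : ∀ g ∈ X, g ≠ g1 → g ≠ g2 → u g < 1 / 13 := fun g hg h1 h2 => by
    linarith [htriple g hg h1 h2, htop1 g hg h1, htop2 g hg h1 h2]
  obtain ⟨g, hgX1, hg1', hg2'⟩ : ∃ g ∈ X1, g ≠ g1 ∧ g ≠ g2 := by
    by_contra! h
    have hX1pair : X1 ⊆ {g1, g2} := fun x hx => by
      by_cases hx1 : x = g1
      · simp [hx1]
      · simp [h x hx hx1]
    have hle := sum_le_sum_of_subset_of_nonneg hX1pair fun j _ _ => hu j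
    rw [sum_pair hgne] at hle
    obtain ⟨g3, hg3, h31, h32⟩ := X.exists_mem_ne_ne hXcard g1 g2
    linarith [htriple g3 hg3 h31 h32, hu g3]
  have hX1lt : ∑ j ∈ X1, u j < 7 / 13 := by
    rw [← sum_erase_add X1 u hgX1]
    linarith [hX1min g hgX1, hsmall g (hX1sub hgX1) hg1' hg2']
  rw [sum_sdiff_eq_sub hX1sub]
  linarith

/-- Let `u` be an additive nonnegative valuation on a finite set `X` with
at least 3 items and `u X ≥ 1`, let `t = 6/13`, and suppose every 3-element subset of
`X` has value `< t/2`. Let `g1, g2` be the two most valuable items and `X1 ⊆ X` a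
minimal subset containing `{g1, g2}` with `u X1 ≥ t` (removing any element drops it
below `t`). Then `u (X \ X1) ≥ t`. -/
theorem stmt_15 {ι : Type*} [DecidableEq ι]
    (u : ι → ℝ) (hu : ∀ j, 0 ≤ u j)
    (X : Finset ι) (hXval : (1 : ℝ) ≤ ∑ j ∈ X, u j) (hXcard : 3 ≤ X.card)
    (h3 : ∀ S ⊆ X, S.card = 3 → ∑ j ∈ S, u j < (6 / 13 : ℝ) / 2)
    (g1 g2 : ι) (hg1 : g1 ∈ X) (hg2 : g2 ∈ X) (hgne : g1 ≠ g2)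
    (htop1 : ∀ g ∈ X, g ≠ g1 → u g ≤ u g1)
    (htop2 : ∀ g ∈ X, g ≠ g1 → g ≠ g2 → u g ≤ u g2)
    (X1 : Finset ι) (hX1sub : X1 ⊆ X) (hg1X1 : g1 ∈ X1) (hg2X1 : g2 ∈ X1)
    (hX1val : (6 / 13 : ℝ) ≤ ∑ j ∈ X1, u j)
    (hX1min : ∀ g ∈ X1, ∑ j ∈ X1.erase g, u j < (6 / 13 : ℝ)) :
    (6 / 13 : ℝ) ≤ ∑ j ∈ X \ X1, u j :=
  stmt_15_general u hu X hXval hXcard h3 g1 g2 hg1 hg2 hgne htop1 htop2 X1 hX1sub hX1val hX1min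
end
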